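/- arXiv:2009.11791 — 8 statements merged into one kernel-verified Lean document; each statement's English description precedes it below -/
import Mathlib

section
/- Let A be a commutative ring equipped with a ℤ-grading A = ⊕_{n∈ℤ} A_n, and let (J_d)_{d∈D} be a family of homogeneous ideals of A indexed by a set D. Suppose that for every integer N there exists an index d ∈ D such that every nonzero homogeneous element of J_d has degree greater than N (i.e. the minimal degrees n_d of the ideals J_d are unbounded above). Then the intersection ⋂_{d∈D} J_d is the zero ideal. -/
theorem DirectSum.eq_zero_of_forall_decompose_eq_zero {ι M σ : Type*} [DecidableEq ι]
    [AddCommMonoid M] [SetLike σ M] [AddSubmonoidClass σ M] (ℳ : ι → σ) [Decomposition ℳ]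
    {x : M} (h : ∀ i, (decompose ℳ x i : M) = 0) : x = 0 :=
  (decompose ℳ).injective <| by ext i; simp [h]

theorem Ideal.IsHomogeneous.decompose_eq_zero_of_mem {ι A σ : Type*} [DecidableEq ι]
    [AddMonoid ι] [Semiring A] [SetLike σ A] [AddSubmonoidClass σ A] {𝒜 : ι → σ}
    [GradedRing 𝒜] {J : Ideal A} (hJ : J.IsHomogeneous 𝒜) {i : ι}
    (hJi : ∀ b ∈ J, b ∈ 𝒜 i → b = 0) {a : A} (ha : a ∈ J) :
    (DirectSum.decompose 𝒜 a i : A) = 0 :=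
  hJi _ (hJ i ha) (SetLike.coe_mem _)

/-- Lemma 2.4 of the paper: if `A` is a ℤ-graded commutative ring and `(J d)` is a family of
homogeneous ideals whose minimal degrees are unbounded above (for every `N` there is `d` such
that every nonzero homogeneous element of `J d` has degree greater than `N`), then the
intersection of the `J d` is zero. -/
theorem graded_inf_eq_bot_of_degrees_unbounded
    {A : Type*} [CommRing A] (𝒜 : ℤ → Submodule ℤ A) [GradedRing 𝒜]
    {D : Type*} (J : D → Ideal A)
    (hhom : ∀ d : D, Ideal.IsHomogeneous 𝒜 (J d))
    (hdeg : ∀ N : ℤ, ∃ d : D, ∀ (n : ℤ) (a : A), a ∈ J d → a ∈ 𝒜 n → a ≠ 0 → N < n) :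
    (⨅ d : D, J d) = ⊥ := by
  refine eq_bot_iff.2 fun a ha => ?_
  rw [Ideal.mem_iInf] at ha
  rw [Ideal.mem_bot]
  refine DirectSum.eq_zero_of_forall_decompose_eq_zero 𝒜 fun n => ?_
  obtain ⟨d, hd⟩ := hdeg n
  have hJn : ∀ b ∈ J d, b ∈ 𝒜 n → b = 0 := fun b hbJ hbn =>
    by_contra fun hb => (hd n b hbJ hbn hb).false
  exact (hhom d).decompose_eq_zero_of_mem hJn (ha d)
end

section
/- Let A be a (possibly noncommutative) ring and let s ∈ A be an element which is not nilpotent and such that ad_s is locally nilpotent, i.e. for every a ∈ A there exists n with ad_s^n(a) = 0, where ad_s(a) = sa − as. Then the multiplicative set S = {s^k : k ≥ 0} (which does not contain 0) is both a right and a left denominator set; explicitly: (1) for every a ∈ A and k ≥ 0 there exist b ∈ A and m ≥ 0 with a·s^m = s^k·b (right Ore condition); (2) for every a ∈ A and k ≥ 0, if s^k·a = 0 then a·s^m = 0 for some m ≥ 0 (right regularity); (3) for every a ∈ A and k ≥ 0 there exist b ∈ A and m ≥ 0 with s^m·a = b·s^k (left Ore condition); (4) for every a ∈ A and k ≥ 0,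 if a·s^k = 0 then s^m·a = 0 for some m ≥ 0 (left regularity). In particular the right and left rings of fractions A S^{-1} ≅ S^{-1} A exist. -/
/-!
Writing `δ = ⁅s, ·⁆`, the identity `a * s ^ (n + 1) = s * (a * s ^ n) - δ a * s ^ n` shows by
induction on `n` that `δ ^ n a = 0` forces `a * s ^ n ∈ s * A`, and forces `a * s ^ n = 0` when
moreover `s * a = 0` (because `s * a = 0` implies `s * δ a = 0`). Iterating these one power of `s`
at a time gives the right Ore and right regularity conditions. The left conditions are the right
ones in `Aᵐᵒᵖ`, where `⁅op s, op a⁆ = -op ⁅s, a⁆`, so `ad (op s)` is again locally nilpotent.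
-/

open MulOpposite

section

variable {A : Type*} [Ring A]

def IsLocallyNilpotentAd (s : A) : Prop :=
  ∀ a : A, ∃ n : ℕ, (fun x => ⁅s, x⁆)^[n] a = 0

theorem mul_pow_succ_eq_mul_sub_lie_mul (s a : A) (n : ℕ) :
    a * s ^ (n + 1) = s * (a * s ^ n) - ⁅s, a⁆ * s ^ n := by
  rw [Ring.lie_def, pow_succ']
  noncomm_ring

theorem exists_mul_pow_eq_mul_of_iterate_lie_eq_zero {s a : A} {n : ℕ}
    (h : (fun x => ⁅s, x⁆)^[n] a = 0) : ∃ b, a * s ^ n = s * b := by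
  induction n generalizing a with
  | zero => exact ⟨0, by simp_all⟩
  | succ n ih =>
    obtain ⟨b, hb⟩ := ih (a := ⁅s, a⁆) h
    exact ⟨a * s ^ n - b, by rw [mul_pow_succ_eq_mul_sub_lie_mul, hb, mul_sub]⟩

theorem mul_pow_eq_zero_of_iterate_lie_eq_zero {s a : A} {n : ℕ}
    (h : (fun x => ⁅s, x⁆)^[n] a = 0) (hsa : s * a = 0) : a * s ^ n = 0 := by
  induction n generalizing a with
  | zero => simp_all
  | succ n ih =>
    have hs_lie : s * ⁅s, a⁆ = 0 := by
      rw [Ring.lie_def, mul_sub, hsa, ← mul_assoc, hsa, mul_zero, zero_mul, sub_zero]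
    rw [mul_pow_succ_eq_mul_sub_lie_mul, ih h hs_lie, ← mul_assoc, hsa, zero_mul, sub_zero]

theorem MulOpposite.lie_op (x y : A) : ⁅op x, op y⁆ = -op ⁅x, y⁆ := by
  simp only [Ring.lie_def, ← op_mul, ← op_sub, ← op_neg, neg_sub]

theorem iterate_lie_op_eq_zero {s a : A} {n : ℕ} (h : (fun x => ⁅s, x⁆)^[n] a = 0) :
    (fun x => ⁅op s, x⁆)^[n] (op a) = 0 := by
  have h_semiconj : Function.Semiconj (op : A → Aᵐᵒᵖ) (Neg.neg ∘ fun x => ⁅s, x⁆)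
      (fun x => ⁅op s, x⁆) := fun x => (lie_op s x).symm
  have h_comm : Function.Commute (Neg.neg : A → A) (fun x => ⁅s, x⁆) :=
    fun x => by simp only [Ring.lie_def]; noncomm_ring
  rw [← h_semiconj.iterate_right n a, h_comm.comp_iterate, Function.comp_apply, h,
    Function.iterate_fixed neg_zero, op_zero]

namespace IsLocallyNilpotentAd

variable {s : A}

theorem op (hs : IsLocallyNilpotentAd s) : IsLocallyNilpotentAd (op s) := fun x => by
  obtain ⟨n, hn⟩ := hs x.unop
  exact ⟨n, iterate_lie_op_eq_zero hn⟩

theorem exists_mul_pow_eq_pow_mul (hs : IsLocallyNilpotentAd s) (a : A) (k : ℕ) :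
    ∃ (b : A) (m : ℕ), a * s ^ m = s ^ k * b := by
  induction k with
  | zero => exact ⟨a, 0, by simp⟩
  | succ k ih =>
    obtain ⟨b, m, hb⟩ := ih
    obtain ⟨n, hn⟩ := hs b
    obtain ⟨c, hc⟩ := exists_mul_pow_eq_mul_of_iterate_lie_eq_zero hn
    refine ⟨c, m + n, ?_⟩
    rw [pow_add, ← mul_assoc, hb, mul_assoc, hc, pow_succ, mul_assoc]

theorem exists_mul_pow_eq_zero_of_pow_mul_eq_zero (hs : IsLocallyNilpotentAd s) {a : A} {k : ℕ}
    (h : s ^ k * a = 0) : ∃ m : ℕ, a * s ^ m = 0 := by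
  induction k generalizing a with
  | zero => exact ⟨0, by simpa using h⟩
  | succ k ih =>
    obtain ⟨n, hn⟩ := hs (s ^ k * a)
    have h_kill : s ^ k * a * s ^ n = 0 :=
      mul_pow_eq_zero_of_iterate_lie_eq_zero hn (by rw [← mul_assoc, ← pow_succ', h])
    obtain ⟨m, hm⟩ := ih (a := a * s ^ n) (by rw [← mul_assoc, h_kill])
    exact ⟨n + m, by rw [pow_add, ← mul_assoc, hm]⟩

end IsLocallyNilpotentAd

end

/-- Corollary 6.3 ('GabberSimple') of the paper: if `s` is a non-nilpotent element of a ring `A`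
whose adjoint action `ad s` is locally nilpotent, then the multiplicative set
`S = {s^k : k ≥ 0}` does not contain `0` and is both a right and a left denominator set:
it satisfies the right and left Ore conditions together with the corresponding regularity
conditions, so the rings of fractions `A S⁻¹ ≅ S⁻¹ A` exist. -/
theorem powers_denominator_set_of_locally_nilpotent_ad
    {A : Type*} [Ring A] (s : A)
    (hnn : ¬ IsNilpotent s)
    (hln : ∀ a : A, ∃ n : ℕ, (fun a => s * a - a * s)^[n] a = 0) :
    (∀ k : ℕ, s ^ k ≠ 0) ∧
    (∀ (a : A) (k : ℕ), ∃ (b : A) (m : ℕ), a * s ^ m = s ^ k * b) ∧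
    (∀ (a : A) (k : ℕ), s ^ k * a = 0 → ∃ m : ℕ, a * s ^ m = 0) ∧
    (∀ (a : A) (k : ℕ), ∃ (b : A) (m : ℕ), s ^ m * a = b * s ^ k) ∧
    (∀ (a : A) (k : ℕ), a * s ^ k = 0 → ∃ m : ℕ, s ^ m * a = 0) := by
  have hs : IsLocallyNilpotentAd s := hln
  refine ⟨fun k hk => hnn ⟨k, hk⟩, hs.exists_mul_pow_eq_pow_mul,
    fun a k => hs.exists_mul_pow_eq_zero_of_pow_mul_eq_zero, fun a k => ?_, fun a k h => ?_⟩
  · obtain ⟨b, m, hb⟩ := hs.op.exists_mul_pow_eq_pow_mul (op a) k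
    exact ⟨b.unop, m, by simpa using congrArg unop hb⟩
  · obtain ⟨m, hm⟩ := hs.op.exists_mul_pow_eq_zero_of_pow_mul_eq_zero (a := op a) (k := k)
      (by simpa using congrArg op h)
    exact ⟨m, by simpa using congrArg unop hm⟩
end

section
/- Let ℂ((X)) be the field of formal Laurent series over ℂ and write t := X^{-1}, identifying ℂ((X)) with ℂ((t^{-1})) and ℂ[[X]] with ℂ[[t^{-1}]]. Let p ∈ ℂ((X)) lie in Xℂ[[X]] (i.e. the coefficient of X^n in p vanishes for all n ≤ 0), write p₁ and p₂ for the coefficients of X and X² in p, and assume p₁ ≠ 0. Set q := p₁·t − p₂ − p₁²·p^{-1} ∈ ℂ((X)). Then: (a) q ∈ Xℂ[[X]], i.e. the coefficient of X^n in q vanishes for all n ≤ 0; (b) p₁·p^{-1} − t ∈ ℂ[[X]], i.e. the coefficient of X^n in p₁·p^{-1} vanishes for all n < −1 and its coefficient of X^{-1} equals 1; and (c) the following identity of 2×2 matrices over ℂ((X)) holds: [[t − p₁^{-1}p₂, −p₁],[p₁^{-1}, 0]] · [[1, p],[0, 1]] = [[1, q],[0, 1]] · [[p₁·p^{-1}, 0],[p₁^{-1},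 p₁^{-1}·p]]. -/
/-!
Writing `p = X u` with `u` a power series of constant term `p₁`, we get `p⁻¹ = X⁻¹ u⁻¹`, and the
first two coefficients of `u⁻¹` are `p₁⁻¹` and `-p₂ / p₁²`. Hence `p₁² p⁻¹ = p₁ t - p₂ + O(X)`,
which gives (a) and (b). The matrix identity (c) holds over any field once `p` and `p₁` are
nonzero, by expanding both products.
-/

noncomputable def Xls : LaurentSeries ℂ := HahnSeries.single (1 : ℤ) (1 : ℂ)

/-- The element `t = X⁻¹` of `ℂ((X))`, modelling the variable `t` of `ℂ((t⁻¹))`. -/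
noncomputable def tls : LaurentSeries ℂ := Xls⁻¹

noncomputable def Cls : ℂ →+* LaurentSeries ℂ := algebraMap ℂ (LaurentSeries ℂ)

open scoped PowerSeries LaurentSeries

namespace PowerSeries

variable {K : Type*} [Field K]

theorem coeff_one_inv (φ : K⟦X⟧) (hφ : constantCoeff φ ≠ 0) :
    coeff 1 φ⁻¹ = -coeff 1 φ / constantCoeff φ ^ 2 := by
  rw [coeff_inv, if_neg one_ne_zero, Finset.Nat.antidiagonal_succ]
  simp [field]

theorem coe_inv (φ : K⟦X⟧) (hφ : constantCoeff φ ≠ 0) :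
    ((φ⁻¹ : K⟦X⟧) : K⸨X⸩) = (φ : K⸨X⸩)⁻¹ :=
  eq_inv_of_mul_eq_one_right (by rw [← coe_mul, PowerSeries.mul_inv_cancel φ hφ, coe_one])

end PowerSeries

namespace LaurentSeries

variable {K : Type*} [Field K]

theorem coeff_C_mul (c : K) (x : K⸨X⸩) (n : ℤ) :
    (HahnSeries.C c * x).coeff n = c * x.coeff n := by
  rw [HahnSeries.C_mul_eq_smul, HahnSeries.coeff_smul, smul_eq_mul]

noncomputable def shiftPowerSeries (x : K⸨X⸩) (m : ℤ) : K⟦X⟧ :=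
  PowerSeries.mk fun k => x.coeff (m + k)

theorem constantCoeff_shiftPowerSeries (x : K⸨X⸩) (m : ℤ) :
    PowerSeries.constantCoeff (x.shiftPowerSeries m) = x.coeff m := by
  simp [shiftPowerSeries]

theorem coeff_one_shiftPowerSeries (x : K⸨X⸩) (m : ℤ) :
    PowerSeries.coeff 1 (x.shiftPowerSeries m) = x.coeff (m + 1) := by
  simp [shiftPowerSeries]

variable {x : K⸨X⸩} {m : ℤ}

theorem eq_single_mul_shiftPowerSeries (hx : ∀ n < m, x.coeff n = 0) :
    x = HahnSeries.single m 1 * (x.shiftPowerSeries m : K⸨X⸩) := by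
  ext n
  rw [← sub_add_cancel n m, HahnSeries.coeff_single_mul_add, one_mul, PowerSeries.coeff_coe]
  split_ifs with h
  · exact hx _ (by omega)
  · rw [shiftPowerSeries, PowerSeries.coeff_mk]
    congr 1
    omega

theorem inv_eq_single_mul_inv_shiftPowerSeries (hx : ∀ n < m, x.coeff n = 0) (hm : x.coeff m ≠ 0) :
    x⁻¹ = HahnSeries.single (-m) 1 * (((x.shiftPowerSeries m)⁻¹ : K⟦X⟧) : K⸨X⸩) := by
  conv_lhs => rw [eq_single_mul_shiftPowerSeries hx]
  rw [mul_inv, HahnSeries.inv_single, inv_one, PowerSeries.coe_inv]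
  rwa [constantCoeff_shiftPowerSeries]

theorem coeff_inv_sub (hx : ∀ n < m, x.coeff n = 0) (hm : x.coeff m ≠ 0) (n : ℤ) :
    x⁻¹.coeff (n - m) = (((x.shiftPowerSeries m)⁻¹ : K⟦X⟧) : K⸨X⸩).coeff n := by
  rw [inv_eq_single_mul_inv_shiftPowerSeries hx hm, sub_eq_add_neg,
    HahnSeries.coeff_single_mul_add, one_mul]

theorem coeff_inv_of_lt (hx : ∀ n < m, x.coeff n = 0) (hm : x.coeff m ≠ 0) {n : ℤ}
    (hn : n < -m) : x⁻¹.coeff n = 0 := by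
  rw [← sub_add_cancel n (-m), ← sub_eq_add_neg, coeff_inv_sub hx hm, PowerSeries.coeff_coe,
    if_pos (by omega)]

theorem coeff_inv_neg (hx : ∀ n < m, x.coeff n = 0) (hm : x.coeff m ≠ 0) :
    x⁻¹.coeff (-m) = (x.coeff m)⁻¹ := by
  rw [← zero_sub, coeff_inv_sub hx hm, ← Nat.cast_zero, coeff_coe_powerSeries,
    PowerSeries.coeff_zero_eq_constantCoeff, PowerSeries.constantCoeff_inv,
    constantCoeff_shiftPowerSeries]

theorem coeff_inv_one_sub (hx : ∀ n < m, x.coeff n = 0) (hm : x.coeff m ≠ 0) :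
    x⁻¹.coeff (1 - m) = -x.coeff (m + 1) / x.coeff m ^ 2 := by
  rw [coeff_inv_sub hx hm, ← Nat.cast_one, coeff_coe_powerSeries,
    PowerSeries.coeff_one_inv _ (by rwa [constantCoeff_shiftPowerSeries]),
    constantCoeff_shiftPowerSeries, coeff_one_shiftPowerSeries, Nat.cast_one]

theorem coeff_sub_C_sq_mul_inv_of_nonpos (hx : ∀ n ≤ 0, x.coeff n = 0) (hx1 : x.coeff 1 ≠ 0)
    {n : ℤ} (hn : n ≤ 0) :
    (HahnSeries.C (x.coeff 1) * HahnSeries.single (-1) 1 - HahnSeries.C (x.coeff 2)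
      - HahnSeries.C (x.coeff 1) ^ 2 * x⁻¹).coeff n = 0 := by
  have hx' : ∀ n < 1, x.coeff n = 0 := fun n hn => hx n (by omega)
  rw [← map_pow, HahnSeries.coeff_sub, HahnSeries.coeff_sub, coeff_C_mul, coeff_C_mul,
    HahnSeries.C_apply, HahnSeries.coeff_single, HahnSeries.coeff_single]
  obtain hn | rfl | rfl : n < -1 ∨ n = -1 ∨ n = 0 := by omega
  · rw [coeff_inv_of_lt hx' hx1 hn, if_neg hn.ne, if_neg (by omega)]
    ring
  · rw [coeff_inv_neg hx' hx1]
    simp [field]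
  · rw [show (0 : ℤ) = 1 - 1 from rfl, coeff_inv_one_sub hx' hx1]
    simp [field]

end LaurentSeries

theorem impsi_matrix_identity {F : Type*} [Field F] (t x c b : F) (hx : x ≠ 0) (hc : c ≠ 0) :
    !![t - c⁻¹ * b, -c; c⁻¹, 0] * !![1, x; 0, 1]
      = !![1, c * t - b - c ^ 2 * x⁻¹; 0, 1] * !![c * x⁻¹, 0; c⁻¹, c⁻¹ * x] := by
  rw [Matrix.mul_fin_two, Matrix.mul_fin_two]
  simp [field, ← sub_eq_add_neg]

theorem Cls_eq_C (c : ℂ) : Cls c = HahnSeries.C c :=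
  LaurentSeries.algebraMap_apply ℂ c

theorem tls_eq_single : tls = HahnSeries.single (-1) 1 := by
  rw [tls, Xls, HahnSeries.inv_single, inv_one]

/-- The computations from the proof of Lemma 5.6 ('le:impsi') of the paper: for
`p ∈ Xℂ[[X]]` with `p₁ = coeff X p ≠ 0` and `q := p₁ t − p₂ − p₁² p⁻¹`, we have
(a) `q ∈ Xℂ[[X]]`; (b) `p₁ p⁻¹ − t ∈ ℂ[[X]]`; and (c) the stated Gauss-type
2×2 matrix identity over `ℂ((X))`. -/
theorem impsi_computations (p : LaurentSeries ℂ)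
    (hp : ∀ n : ℤ, n ≤ 0 → p.coeff n = 0)
    (hp1 : p.coeff 1 ≠ 0) :
    (∀ n : ℤ, n ≤ 0 →
      (Cls (p.coeff 1) * tls - Cls (p.coeff 2) - (Cls (p.coeff 1)) ^ 2 * p⁻¹).coeff n = 0) ∧
    ((∀ n : ℤ, n < -1 → (Cls (p.coeff 1) * p⁻¹).coeff n = 0) ∧
      (Cls (p.coeff 1) * p⁻¹).coeff (-1) = 1) ∧
    (!![tls - Cls ((p.coeff 1)⁻¹ * p.coeff 2), -Cls (p.coeff 1);
        Cls ((p.coeff 1)⁻¹), 0] * !![1, p; 0, 1]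
      = !![1, Cls (p.coeff 1) * tls - Cls (p.coeff 2) - (Cls (p.coeff 1)) ^ 2 * p⁻¹; 0, 1] *
        !![Cls (p.coeff 1) * p⁻¹, 0;
           Cls ((p.coeff 1)⁻¹), Cls ((p.coeff 1)⁻¹) * p]) := by
  have hp' : ∀ n < 1, p.coeff n = 0 := fun n hn => hp n (by omega)
  have hp0 : p ≠ 0 := by
    rintro rfl
    exact hp1 rfl
  have hC : HahnSeries.C (p.coeff 1) ≠ 0 := (map_ne_zero (HahnSeries.C (Γ := ℤ))).mpr hp1
  simp only [Cls_eq_C, tls_eq_single, map_mul, map_inv₀]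
  refine ⟨fun n hn => LaurentSeries.coeff_sub_C_sq_mul_inv_of_nonpos hp hp1 hn,
    ⟨fun n hn => ?_, ?_⟩, impsi_matrix_identity _ _ _ _ hp0 hC⟩
  · rw [LaurentSeries.coeff_C_mul, LaurentSeries.coeff_inv_of_lt hp' hp1 hn, mul_zero]
  · rw [LaurentSeries.coeff_C_mul, LaurentSeries.coeff_inv_neg hp' hp1, mul_inv_cancel₀ hp1]
end

section
/- Let ℂ((X)) be the field of formal Laurent series over ℂ and write t := X^{-1}, identifying ℂ((X)) with ℂ((t^{-1})) and ℂ[[X]] with ℂ[[t^{-1}]]. Let b ∈ ℂ with b ≠ 0 and c ∈ ℂ. Then the following identity of 2×2 matrices over ℂ((X)) holds: [[0, b],[−b^{-1}, t − c]] = [[1, b(t−c)^{-1}],[0, 1]] · [[t(t−c)^{-1}, 0],[0, (t−c)t^{-1}]] · [[t^{-1}, 0],[0, t]] · [[1, 0],[−b^{-1}(t−c)^{-1}, 1]]. Moreover the matrix on the left has determinant 1, the entries b(t−c)^{-1} and −b^{-1}(t−c)^{-1} lie in Xℂ[[X]] (coefficient of X^n vanishes for n ≤ 0), and t(t−c)^{-1}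 and (t−c)t^{-1} lie in 1 + Xℂ[[X]]. -/
/-!
Since `t = X⁻¹`, we have `t - c = X⁻¹ (1 - c X)`, and `1 - c X` is a power series with constant
coefficient `1`, hence a unit of `ℂ[[X]]`. Therefore `(t - c)⁻¹ = X (1 - c X)⁻¹` lies in
`X ℂ[[X]]`, while `t (t - c)⁻¹ = (1 - c X)⁻¹` and `(t - c) t⁻¹ = 1 - c X` lie in `1 + X ℂ[[X]]`.
The matrix identity holds in any field: the two diagonal factors multiply to
`diag((t - c)⁻¹, t - c)`.
-/

theorem Matrix.gauss_decomposition_fin_two {K : Type*} [Field K] {b t u : K}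
    (hb : b ≠ 0) (ht : t ≠ 0) (hu : u ≠ 0) :
    !![0, b; -b⁻¹, u] = !![1, b * u⁻¹; 0, 1] * !![t * u⁻¹, 0; 0, u * t⁻¹] *
      !![t⁻¹, 0; 0, t] * !![1, 0; -b⁻¹ * u⁻¹, 1] := by
  ext i j
  fin_cases i <;> fin_cases j <;> simp [Matrix.mul_apply, Fin.sum_univ_succ, field]

namespace PowerSeries

open LaurentSeries

theorem coeff_coe_of_neg {R : Type*} [Semiring R] (f : R⟦X⟧) {n : ℤ} (hn : n < 0) :
    (f : R⸨X⸩).coeff n = 0 := by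
  rw [coeff_coe, if_pos hn]

theorem coeff_coe_zero {R : Type*} [Semiring R] (f : R⟦X⟧) :
    (f : R⸨X⸩).coeff 0 = constantCoeff f := by
  rw [coeff_coe, if_neg (lt_irrefl 0), Int.natAbs_zero, coeff_zero_eq_constantCoeff_apply]

theorem coeff_coe_of_nonpos {R : Type*} [Semiring R] {f : R⟦X⟧} (hf : constantCoeff f = 0)
    {n : ℤ} (hn : n ≤ 0) : (f : R⸨X⸩).coeff n = 0 := by
  rcases hn.lt_or_eq with hn | rfl
  · exact coeff_coe_of_neg f hn
  · rw [coeff_coe_zero, hf]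

theorem coe_inv_s9 {K : Type*} [Field K] {f : K⟦X⟧} (hf : constantCoeff f ≠ 0) :
    ((f⁻¹ : K⟦X⟧) : K⸨X⸩) = (f : K⸨X⸩)⁻¹ := by
  refine (inv_eq_of_mul_eq_one_right ?_).symm
  rw [← coe_mul, PowerSeries.mul_inv_cancel f hf, coe_one]

end PowerSeries

open PowerSeries LaurentSeries

theorem Xls_eq_coe : Xls = ((X : ℂ⟦X⟧) : ℂ⸨X⸩) := coe_X.symm

theorem Xls_ne_zero : Xls ≠ 0 := HahnSeries.single_ne_zero one_ne_zero

theorem tls_ne_zero : tls ≠ 0 := inv_ne_zero Xls_ne_zero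

theorem Xls_mul_tls : Xls * tls = 1 := mul_inv_cancel₀ Xls_ne_zero

theorem Cls_eq_coe (a : ℂ) : Cls a = ((C a : ℂ⟦X⟧) : ℂ⸨X⸩) := by
  rw [Cls, HahnSeries.algebraMap_apply', ← PowerSeries.C_eq_algebraMap]

theorem coeff_Cls_mul (a : ℂ) (x : ℂ⸨X⸩) (n : ℤ) : (Cls a * x).coeff n = a * x.coeff n := by
  rw [Cls_eq_coe, coe_C, HahnSeries.C_apply, HahnSeries.coeff_single_zero_mul]

theorem tls_sub_Cls_mul_inv_tls (c : ℂ) :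
    (tls - Cls c) * tls⁻¹ = ((1 - C c * X : ℂ⟦X⟧) : ℂ⸨X⸩) := by
  rw [sub_mul, mul_inv_cancel₀ tls_ne_zero, tls, inv_inv]
  push_cast
  rw [Xls_eq_coe, Cls_eq_coe]

theorem tls_sub_Cls_ne_zero (c : ℂ) : tls - Cls c ≠ 0 := by
  refine left_ne_zero_of_mul (b := tls⁻¹) fun h => ?_
  have h₀ := coeff_coe_zero (1 - C c * X : ℂ⟦X⟧)
  rw [← tls_sub_Cls_mul_inv_tls, h] at h₀
  simp at h₀

theorem inv_tls_sub_Cls (c : ℂ) :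
    (tls - Cls c)⁻¹ = ((X * (1 - C c * X)⁻¹ : ℂ⟦X⟧) : ℂ⸨X⸩) := by
  rw [coe_mul, coe_inv_s9 (by simp), ← tls_sub_Cls_mul_inv_tls, mul_inv, inv_inv, ← Xls_eq_coe,
    mul_left_comm, Xls_mul_tls, mul_one]

theorem coeff_inv_tls_sub_Cls_of_nonpos (c : ℂ) {n : ℤ} (hn : n ≤ 0) :
    ((tls - Cls c)⁻¹).coeff n = 0 := by
  rw [inv_tls_sub_Cls]
  exact coeff_coe_of_nonpos (by simp) hn

theorem tls_mul_inv_tls_sub_Cls (c : ℂ) :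
    tls * (tls - Cls c)⁻¹ = (((1 - C c * X)⁻¹ : ℂ⟦X⟧) : ℂ⸨X⸩) := by
  rw [inv_tls_sub_Cls, coe_mul, ← Xls_eq_coe, ← mul_assoc, mul_comm tls, Xls_mul_tls, one_mul]

/-- The Gauss decomposition from the proof of Lemma 5.3 ('le:W0alphai') of the paper:
for `b ≠ 0`, the matrix `[[0, b],[−b⁻¹, t−c]]` factors as an element of
`U₁[[t⁻¹]] · T₁[[t⁻¹]] · t^{−α^∨} · U_{−,1}[[t⁻¹]]` for `SL₂`; moreover it has determinant `1`,
the unipotent entries lie in `Xℂ[[X]]`, and the torus entries lie in `1 + Xℂ[[X]]`. -/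
theorem W0alphai_gauss_decomposition (b c : ℂ) (hb : b ≠ 0) :
    (!![0, Cls b; -(Cls b)⁻¹, tls - Cls c]
      = !![1, Cls b * (tls - Cls c)⁻¹; 0, 1] *
        !![tls * (tls - Cls c)⁻¹, 0; 0, (tls - Cls c) * tls⁻¹] *
        !![tls⁻¹, 0; 0, tls] *
        !![1, 0; -(Cls b)⁻¹ * (tls - Cls c)⁻¹, 1]) ∧
    (!![0, Cls b; -(Cls b)⁻¹, tls - Cls c] : Matrix (Fin 2) (Fin 2) (LaurentSeries ℂ)).det = 1 ∧
    (∀ n : ℤ, n ≤ 0 → (Cls b * (tls - Cls c)⁻¹).coeff n = 0) ∧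
    (∀ n : ℤ, n ≤ 0 → (-(Cls b)⁻¹ * (tls - Cls c)⁻¹).coeff n = 0) ∧
    ((tls * (tls - Cls c)⁻¹).coeff 0 = 1 ∧
      ∀ n : ℤ, n < 0 → (tls * (tls - Cls c)⁻¹).coeff n = 0) ∧
    (((tls - Cls c) * tls⁻¹).coeff 0 = 1 ∧
      ∀ n : ℤ, n < 0 → ((tls - Cls c) * tls⁻¹).coeff n = 0) := by
  have hCb : Cls b ≠ 0 := (map_ne_zero Cls).mpr hb
  refine ⟨Matrix.gauss_decomposition_fin_two hCb tls_ne_zero (tls_sub_Cls_ne_zero c), ?_,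
    fun n hn => ?_, fun n hn => ?_, ?_, ?_⟩
  · rw [Matrix.det_fin_two_of]
    linear_combination mul_inv_cancel₀ hCb
  · rw [coeff_Cls_mul, coeff_inv_tls_sub_Cls_of_nonpos c hn, mul_zero]
  · rw [← map_inv₀, ← map_neg, coeff_Cls_mul, coeff_inv_tls_sub_Cls_of_nonpos c hn, mul_zero]
  · rw [tls_mul_inv_tls_sub_Cls, coeff_coe_zero, constantCoeff_inv]
    exact ⟨by simp, fun n => coeff_coe_of_neg _⟩
  · rw [tls_sub_Cls_mul_inv_tls, coeff_coe_zero]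
    exact ⟨by simp, fun n => coeff_coe_of_neg _⟩
end

section
/- With notation as in the context, set S_i := H_i^{(m_i+2)} − (1/2)(H_i^{(m_i+1)})² in Y_μ. Then for all i, j ∈ I and all r ≥ 1: [S_i, E_j^{(r)}] = (α_i·α_j)·E_j^{(r+1)} and [S_i, F_j^{(r)}] = −(α_i·α_j)·F_j^{(r+1)}, where α_i·α_j = d_i a_{ij}. -/
/-! The shifted Yangian `Y_μ`, presented by generators and relations as in the paper:
generators `E_i^{(q)}, F_i^{(q)}` for `i ∈ I`, `q ≥ 1` and `H_i^{(p)}` for `p ∈ ℤ`,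
with the relations of Definitions 3.1 and 3.2 of the paper, where `m i = −⟨μ, α_i⟩`. -/

open scoped Classical
namespace ShiftedYangian

/-- Generators of the shifted Yangian: `E i q` and `F i q` for `q ≥ 1`, `H i p` for `p : ℤ`. -/
inductive YGen (I : Type) : Type
  | E : I → ℕ+ → YGen I
  | F : I → ℕ+ → YGen I
  | H : I → ℤ → YGen I

/-- The commutator `[x, y] = x y − y x`. -/
def brkt {A : Type*} [Ring A] (x y : A) : A := x * y - y * x

/-- The iterated bracket `nestBrkt y [x₁, …, x_N] = [x₁, [x₂, ⋯ [x_N, y] ⋯]]`. -/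
def nestBrkt {A : Type*} [Ring A] (y : A) : List A → A
  | [] => y
  | x :: xs => brkt x (nestBrkt y xs)

variable (I : Type) (a : I → I → ℤ) (d : I → ℤ) (m : I → ℤ)

/-- The generator `E_i^{(q)}` of the free algebra. -/
noncomputable def eg (i : I) (q : ℕ+) : FreeAlgebra ℂ (YGen I) := FreeAlgebra.ι ℂ (YGen.E i q)

/-- The generator `F_i^{(q)}` of the free algebra. -/
noncomputable def fg (i : I) (q : ℕ+) : FreeAlgebra ℂ (YGen I) := FreeAlgebra.ι ℂ (YGen.F i q)

/-- The generator `H_i^{(p)}` of the free algebra. -/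
noncomputable def hg (i : I) (p : ℤ) : FreeAlgebra ℂ (YGen I) := FreeAlgebra.ι ℂ (YGen.H i p)

/-- The defining relations of the shifted Yangian `Y_μ`, with `α_i·α_j = d_i a_{ij}` and
`m i = −⟨μ, α_i⟩`. -/
inductive Rel : FreeAlgebra ℂ (YGen I) → FreeAlgebra ℂ (YGen I) → Prop
  | HH : ∀ (i j : I) (p q : ℤ), Rel (brkt (hg I i p) (hg I j q)) 0
  | EF : ∀ (i j : I) (p q : ℕ+),
      Rel (brkt (eg I i p) (fg I j q))
          (if i = j then hg I i ((p : ℤ) + (q : ℤ) - 1) else 0)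
  | HE : ∀ (i j : I) (p : ℤ) (q : ℕ+),
      Rel (brkt (hg I i (p + 1)) (eg I j q) - brkt (hg I i p) (eg I j (q + 1)))
          ((((d i * a i j : ℤ) : ℂ) / 2) • (hg I i p * eg I j q + eg I j q * hg I i p))
  | HF : ∀ (i j : I) (p : ℤ) (q : ℕ+),
      Rel (brkt (hg I i (p + 1)) (fg I j q) - brkt (hg I i p) (fg I j (q + 1)))
          (-((((d i * a i j : ℤ) : ℂ) / 2) • (hg I i p * fg I j q + fg I j q * hg I i p)))
  | EE : ∀ (i j : I) (p q : ℕ+),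
      Rel (brkt (eg I i (p + 1)) (eg I j q) - brkt (eg I i p) (eg I j (q + 1)))
          ((((d i * a i j : ℤ) : ℂ) / 2) • (eg I i p * eg I j q + eg I j q * eg I i p))
  | FF : ∀ (i j : I) (p q : ℕ+),
      Rel (brkt (fg I i (p + 1)) (fg I j q) - brkt (fg I i p) (fg I j (q + 1)))
          (-((((d i * a i j : ℤ) : ℂ) / 2) • (fg I i p * fg I j q + fg I j p * fg I i q)))
  | serreE : ∀ (i j : I), i ≠ j → ∀ (q : ℕ+) (p : Fin (1 - a i j).toNat → ℕ+),
      Rel (∑ σ : Equiv.Perm (Fin (1 - a i j).toNat),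
            nestBrkt (eg I j q) (List.ofFn fun k => eg I i (p (σ k)))) 0
  | serreF : ∀ (i j : I), i ≠ j → ∀ (q : ℕ+) (p : Fin (1 - a i j).toNat → ℕ+),
      Rel (∑ σ : Equiv.Perm (Fin (1 - a i j).toNat),
            nestBrkt (fg I j q) (List.ofFn fun k => fg I i (p (σ k)))) 0
  | Hlow : ∀ (i : I) (p : ℤ), p < m i → Rel (hg I i p) 0
  | Hone : ∀ (i : I), Rel (hg I i (m i)) 1

/-- The shifted Yangian `Y_μ`. -/
abbrev Y := RingQuot (Rel I a d m)

/-- The generator `E_i^{(q)}` of `Y_μ`. -/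
noncomputable def E (i : I) (q : ℕ+) : Y I a d m :=
  RingQuot.mkAlgHom ℂ (Rel I a d m) (eg I i q)

/-- The generator `F_i^{(q)}` of `Y_μ`. -/
noncomputable def F (i : I) (q : ℕ+) : Y I a d m :=
  RingQuot.mkAlgHom ℂ (Rel I a d m) (fg I i q)

/-- The generator `H_i^{(p)}` of `Y_μ`. -/
noncomputable def H (i : I) (p : ℤ) : Y I a d m :=
  RingQuot.mkAlgHom ℂ (Rel I a d m) (hg I i p)

end ShiftedYangian

/-! Put `x_q := E_j^{(q)}` and `c := α_i·α_j`. The relation between `H_i` and `E_j`, read at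
`p = m_i` where `H_i^{(m_i)} = 1` commutes with everything, says that `H_i^{(m_i+1)}` acts on
each `x_q` by the scalar `c`. Read at `p = m_i + 1` it gives
`[H_i^{(m_i+2)}, x_r] = c x_{r+1} + (c/2)(H_i^{(m_i+1)} x_r + x_r H_i^{(m_i+1)})`, and the second
summand is exactly `½ [(H_i^{(m_i+1)})², x_r]`. For `F_j` the same computation runs with `−c`. -/

namespace ShiftedYangian

section Commutator

variable {A : Type*} [Ring A]

theorem one_brkt (x : A) : brkt 1 x = 0 := by
  simp [brkt]

theorem sq_brkt (y z : A) : brkt (y ^ 2) z = y * brkt y z + brkt y z * y := by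
  simp only [brkt, sq, mul_sub, sub_mul, mul_assoc]
  abel

variable {K : Type*} [Field K] [Algebra K A]

theorem sub_smul_brkt (x y z : A) (t : K) :
    brkt (x - t • y) z = brkt x z - t • brkt y z := by
  simp only [brkt, sub_mul, mul_sub, smul_mul_assoc, mul_smul_comm, smul_sub]
  abel

variable {h : ℤ → A} {x : ℕ+ → A} {m : ℤ} {c : K}

theorem brkt_succ_of_eq_one [NeZero (2 : K)] (hm : h m = 1)
    (hrel : ∀ p q, brkt (h (p + 1)) (x q) - brkt (h p) (x (q + 1))
      = (c / 2) • (h p * x q + x q * h p))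
    (q : ℕ+) : brkt (h (m + 1)) (x q) = c • x q := by
  have hq := hrel m q
  rw [hm, one_brkt, sub_zero, one_mul, mul_one] at hq
  rw [hq, ← two_smul K (x q), smul_smul, div_mul_cancel₀ c two_ne_zero]

theorem brkt_levendorskii [NeZero (2 : K)] (hm : h m = 1)
    (hrel : ∀ p q, brkt (h (p + 1)) (x q) - brkt (h p) (x (q + 1))
      = (c / 2) • (h p * x q + x q * h p))
    (r : ℕ+) : brkt (h (m + 2) - (2⁻¹ : K) • h (m + 1) ^ 2) (x r) = c • x (r + 1) := by
  have hlin := brkt_succ_of_eq_one hm hrel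
  have htop : brkt (h (m + 2)) (x r)
      = (c / 2) • (h (m + 1) * x r + x r * h (m + 1)) + c • x (r + 1) := by
    have hr := hrel (m + 1) r
    rwa [add_assoc, one_add_one_eq_two, hlin, sub_eq_iff_eq_add] at hr
  rw [sub_smul_brkt, htop, sq_brkt, hlin, mul_smul_comm, smul_mul_assoc]
  module

end Commutator

variable {I : Type} {a : I → I → ℤ} {d : I → ℤ} {m : I → ℤ}

theorem H_m_eq_one (i : I) : H I a d m i (m i) = 1 := by
  simpa [H] using RingQuot.mkAlgHom_rel ℂ (Rel.Hone (I := I) (a := a) (d := d) (m := m) i)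

theorem brkt_H_E_rel (i j : I) (p : ℤ) (q : ℕ+) :
    brkt (H I a d m i (p + 1)) (E I a d m j q) - brkt (H I a d m i p) (E I a d m j (q + 1))
      = (((d i * a i j : ℤ) : ℂ) / 2) •
          (H I a d m i p * E I a d m j q + E I a d m j q * H I a d m i p) := by
  have h := RingQuot.mkAlgHom_rel ℂ (Rel.HE (I := I) (a := a) (d := d) (m := m) i j p q)
  simpa only [brkt, H, E, map_sub, map_mul, map_smul, map_add] using h

theorem brkt_H_F_rel (i j : I) (p : ℤ) (q : ℕ+) :
    brkt (H I a d m i (p + 1)) (F I a d m j q) - brkt (H I a d m i p) (F I a d m j (q + 1))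
      = (-((d i * a i j : ℤ) : ℂ) / 2) •
          (H I a d m i p * F I a d m j q + F I a d m j q * H I a d m i p) := by
  have h := RingQuot.mkAlgHom_rel ℂ (Rel.HF (I := I) (a := a) (d := d) (m := m) i j p q)
  simp only [brkt, H, F, map_sub, map_mul, map_smul, map_add, map_neg] at h ⊢
  rw [h]
  module

end ShiftedYangian

open ShiftedYangian in
theorem levendorskii_raising_operators_general
    (I : Type) (a : I → I → ℤ) (d : I → ℤ) (m : I → ℤ)
    (i j : I) (r : ℕ+) :
    brkt (H I a d m i (m i + 2) - (2⁻¹ : ℂ) • (H I a d m i (m i + 1)) ^ 2)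
        (E I a d m j r)
      = (d i * a i j) • E I a d m j (r + 1) ∧
    brkt (H I a d m i (m i + 2) - (2⁻¹ : ℂ) • (H I a d m i (m i + 1)) ^ 2)
        (F I a d m j r)
      = -((d i * a i j) • F I a d m j (r + 1)) := by
  rw [← Int.cast_smul_eq_zsmul ℂ, ← Int.cast_smul_eq_zsmul ℂ, ← neg_smul]
  exact ⟨brkt_levendorskii (H_m_eq_one i) (brkt_H_E_rel i j) r,
    brkt_levendorskii (H_m_eq_one i) (brkt_H_F_rel i j) r⟩

open ShiftedYangian in
/-- The commutation property of the Levendorskii-type elements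
`S_i = H_i^{(m_i+2)} − ½ (H_i^{(m_i+1)})²` stated after Definition 3.4 of the paper:
`[S_i, E_j^{(r)}] = (α_i·α_j) E_j^{(r+1)}` and `[S_i, F_j^{(r)}] = −(α_i·α_j) F_j^{(r+1)}`,
where `α_i·α_j = d_i a_{ij}`. -/
theorem levendorskii_raising_operators
    (I : Type) [Fintype I] (a : I → I → ℤ) (d : I → ℤ) (m : I → ℤ)
    (ha2 : ∀ i, a i i = 2) (haneg : ∀ i j, i ≠ j → a i j ≤ 0)
    (hd : ∀ i, 0 < d i) (hsym : ∀ i j, d i * a i j = d j * a j i)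
    (i j : I) (r : ℕ+) :
    brkt (H I a d m i (m i + 2) - (2⁻¹ : ℂ) • (H I a d m i (m i + 1)) ^ 2)
        (E I a d m j r)
      = (d i * a i j) • E I a d m j (r + 1) ∧
    brkt (H I a d m i (m i + 2) - (2⁻¹ : ℂ) • (H I a d m i (m i + 1)) ^ 2)
        (F I a d m j r)
      = -((d i * a i j) • F I a d m j (r + 1)) :=
  levendorskii_raising_operators_general I a d m i j r
end

section
/- With notation as in the context, let Y^≥ ⊆ Y_μ be the unital subalgebra generated by all E_i^{(q)} (i∈I, q≥1) and all H_i^{(p)} (i∈I, p∈ℤ), and let Y^≤ be the unital subalgebra generated by all F_i^{(q)} and all H_i^{(p)}. Then for every l ≥ 1, every i₁,…,i_l ∈ I, every q₁,…,q_l ≥ 1, every j ∈ I and every r ≥ 1: the iterated bracket x = [E_{i₁}^{(q₁)}, [E_{i₂}^{(q₂)}, …, [E_{i_{l−1}}^{(q_{l−1})}, E_{i_l}^{(q_l)}]…]] satisfies [x, F_j^{(r)}] ∈ Y^≥; and symmetrically, the iterated bracket y = [F_{i₁}^{(q₁)}, [F_{i₂}^{(q₂)}, …, [F_{i_{l−1}}^{(q_{l−1})},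 F_{i_l}^{(q_l)}]…]] satisfies [y, E_j^{(r)}] ∈ Y^≤. -/
/-! The shifted Yangian `Y_μ`, presented by generators and relations as in the paper:
generators `E_i^{(q)}, F_i^{(q)}` for `i ∈ I`, `q ≥ 1` and `H_i^{(p)}` for `p ∈ ℤ`,
with the relations of Definitions 3.1 and 3.2 of the paper, where `m i = −⟨μ, α_i⟩`. -/

open scoped Classical
/-! By the Jacobi identity, `[[E_i^{(q)}, x], F] = [E_i^{(q)}, [x, F]] - [x, [E_i^{(q)}, F]]`. The
first term lies in `Y^≥` by induction on the length of the iterated bracket, and the second because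
`x ∈ Y^≥` and `[E_i^{(q)}, F_j^{(r)}] = δ_{ij} H_i^{(q+r-1)}`. The case of `F`'s is symmetric. -/

namespace ShiftedYangian

section Bracket

variable {A : Type*} [Ring A]

theorem brkt_eq_neg_brkt (x y : A) : brkt x y = -brkt y x := by
  simp only [brkt, neg_sub]

theorem brkt_brkt (x y z : A) : brkt (brkt x y) z = brkt x (brkt y z) - brkt y (brkt x z) := by
  simp only [brkt]
  noncomm_ring

variable {S : Type*} [SetLike S A] [SubringClass S A] {B : S}

theorem brkt_mem {x y : A} (hx : x ∈ B) (hy : y ∈ B) : brkt x y ∈ B :=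
  sub_mem (mul_mem hx hy) (mul_mem hy hx)

theorem nestBrkt_mem {y : A} {xs : List A} (hy : y ∈ B) (hxs : ∀ x ∈ xs, x ∈ B) :
    nestBrkt y xs ∈ B := by
  induction xs with
  | nil => exact hy
  | cons x xs ih =>
    rw [List.forall_mem_cons] at hxs
    exact brkt_mem hxs.1 (ih hxs.2)

theorem brkt_nestBrkt_mem {y z : A} {xs : List A} (hy : y ∈ B) (hxs : ∀ x ∈ xs, x ∈ B)
    (hyz : brkt y z ∈ B) (hxz : ∀ x ∈ xs, brkt x z ∈ B) : brkt (nestBrkt y xs) z ∈ B := by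
  induction xs with
  | nil => exact hyz
  | cons x xs ih =>
    rw [List.forall_mem_cons] at hxs hxz
    rw [nestBrkt, brkt_brkt]
    exact sub_mem (brkt_mem hxs.1 (ih hxs.2 hxz.2)) (brkt_mem (nestBrkt_mem hy hxs.2) hxz.1)

theorem brkt_nestBrkt_map_mem {ι : Type*} {f : ι → A} {z : A} (hf : ∀ k, f k ∈ B)
    (hfz : ∀ k, brkt (f k) z ∈ B) (k : ι) (l : List ι) : brkt (nestBrkt (f k) (l.map f)) z ∈ B :=
  brkt_nestBrkt_mem (hf k) (List.forall_mem_map.2 fun k _ => hf k) (hfz k)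
    (List.forall_mem_map.2 fun k _ => hfz k)

end Bracket

section Yangian

variable (I : Type) (a : I → I → ℤ) (d : I → ℤ) (m : I → ℤ)

theorem E_brkt_F (i j : I) (p q : ℕ+) :
    brkt (E I a d m i p) (F I a d m j q)
      = if i = j then H I a d m i ((p : ℤ) + (q : ℤ) - 1) else 0 := by
  simpa [brkt, E, F, H, apply_ite] using
    RingQuot.mkAlgHom_rel ℂ (Rel.EF (a := a) (d := d) (m := m) i j p q)

variable {I a d m} {S : Type*} [SetLike S (Y I a d m)] [SubringClass S (Y I a d m)] {B : S}

theorem E_brkt_F_mem (hH : ∀ i p, H I a d m i p ∈ B) (i j : I) (p q : ℕ+) :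
    brkt (E I a d m i p) (F I a d m j q) ∈ B := by
  rw [E_brkt_F]
  split_ifs
  exacts [hH _ _, zero_mem B]

theorem F_brkt_E_mem (hH : ∀ i p, H I a d m i p ∈ B) (i j : I) (p q : ℕ+) :
    brkt (F I a d m i p) (E I a d m j q) ∈ B := by
  rw [brkt_eq_neg_brkt]
  exact neg_mem (E_brkt_F_mem hH j i q p)

end Yangian

end ShiftedYangian

open ShiftedYangian in
theorem iterated_bracket_commutator_membership_general
    (I : Type) (a : I → I → ℤ) (d : I → ℤ) (m : I → ℤ) :
    ∀ (last : I × ℕ+) (init : List (I × ℕ+)) (j : I) (r : ℕ+),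
      (brkt (nestBrkt (E I a d m last.1 last.2) (init.map fun p => E I a d m p.1 p.2))
          (F I a d m j r)
        ∈ Algebra.adjoin ℂ
            ((Set.range fun p : I × ℕ+ => E I a d m p.1 p.2) ∪
              (Set.range fun p : I × ℤ => H I a d m p.1 p.2))) ∧
      (brkt (nestBrkt (F I a d m last.1 last.2) (init.map fun p => F I a d m p.1 p.2))
          (E I a d m j r)
        ∈ Algebra.adjoin ℂ
            ((Set.range fun p : I × ℕ+ => F I a d m p.1 p.2) ∪
              (Set.range fun p : I × ℤ => H I a d m p.1 p.2))) := by
  intro last init j r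
  have hE : ∀ p : I × ℕ+, E I a d m p.1 p.2 ∈ Algebra.adjoin ℂ
      ((Set.range fun p : I × ℕ+ => E I a d m p.1 p.2) ∪
        (Set.range fun p : I × ℤ => H I a d m p.1 p.2)) :=
    fun p => Algebra.subset_adjoin (Or.inl ⟨p, rfl⟩)
  have hF : ∀ p : I × ℕ+, F I a d m p.1 p.2 ∈ Algebra.adjoin ℂ
      ((Set.range fun p : I × ℕ+ => F I a d m p.1 p.2) ∪
        (Set.range fun p : I × ℤ => H I a d m p.1 p.2)) :=
    fun p => Algebra.subset_adjoin (Or.inl ⟨p, rfl⟩)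
  have hH : ∀ (T : Set (Y I a d m)) i p,
      H I a d m i p ∈ Algebra.adjoin ℂ (T ∪ Set.range fun p : I × ℤ => H I a d m p.1 p.2) :=
    fun _ i p => Algebra.subset_adjoin (Or.inr ⟨(i, p), rfl⟩)
  exact ⟨brkt_nestBrkt_map_mem hE (fun _ => E_brkt_F_mem (hH _) _ _ _ _) last init,
    brkt_nestBrkt_map_mem hF (fun _ => F_brkt_E_mem (hH _) _ _ _ _) last init⟩

open ShiftedYangian in
/-- Lemma 6.10 ('egammafj') of the paper: for any iterated bracket
`x = [E_{i₁}^{(q₁)}, [E_{i₂}^{(q₂)}, …, [E_{i_{l−1}}^{(q_{l−1})}, E_{i_l}^{(q_l)}]…]]` (with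
`l ≥ 1`), the commutator `[x, F_j^{(r)}]` lies in the subalgebra `Y^≥` generated by all
`E`'s and `H`'s, and symmetrically with `E`'s and `F`'s exchanged. -/
theorem iterated_bracket_commutator_membership
    (I : Type) [Fintype I] (a : I → I → ℤ) (d : I → ℤ) (m : I → ℤ)
    (ha2 : ∀ i, a i i = 2) (haneg : ∀ i j, i ≠ j → a i j ≤ 0)
    (hd : ∀ i, 0 < d i) (hsym : ∀ i j, d i * a i j = d j * a j i) :
    ∀ (last : I × ℕ+) (init : List (I × ℕ+)) (j : I) (r : ℕ+),
      (brkt (nestBrkt (E I a d m last.1 last.2) (init.map fun p => E I a d m p.1 p.2))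
          (F I a d m j r)
        ∈ Algebra.adjoin ℂ
            ((Set.range fun p : I × ℕ+ => E I a d m p.1 p.2) ∪
              (Set.range fun p : I × ℤ => H I a d m p.1 p.2))) ∧
      (brkt (nestBrkt (F I a d m last.1 last.2) (init.map fun p => F I a d m p.1 p.2))
          (E I a d m j r)
        ∈ Algebra.adjoin ℂ
            ((Set.range fun p : I × ℕ+ => F I a d m p.1 p.2) ∪
              (Set.range fun p : I × ℤ => H I a d m p.1 p.2))) :=
  iterated_bracket_commutator_membership_general I a d m
end

section
/- With notation as in the context, fix i, j ∈ I and set S_j := H_j^{(m_j+2)} − (1/2)(H_j^{(m_j+1)})² in Y_μ. Write ad_x(a) = xa − ax. Then: (a) (ad_{E_i^{(1)}})²(H_j^{(m_j+1)}) = 0; (b) [E_i^{(1)}, E_i^{(2)}] = −d_i·(E_i^{(1)})²; and (c) (ad_{E_i^{(1)}})³(S_j) = 0. -/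
/-! The shifted Yangian `Y_μ`, presented by generators and relations as in the paper:
generators `E_i^{(q)}, F_i^{(q)}` for `i ∈ I`, `q ≥ 1` and `H_i^{(p)}` for `p ∈ ℤ`,
with the relations of Definitions 3.1 and 3.2 of the paper, where `m i = −⟨μ, α_i⟩`. -/

open scoped Classical
/-! Only the lowest modes enter. Since `H_j^{(m_j)} = 1`, the relation `[H, E]` at `p = m_j` says
that `ad H_j^{(m_j+1)}` acts on every `E_i^{(q)}` by the scalar `c = α_i·α_j`, and at `p = m_j + 1`
it gives `[S_j, E_i^{(1)}] = c E_i^{(2)}`. The relation `[E, E]` for the pair `(i, i)` gives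
`[E_i^{(1)}, E_i^{(2)}] = −d_i (E_i^{(1)})²`, which commutes with `E_i^{(1)}`. -/

namespace ShiftedYangian

lemma map_brkt {R A B : Type*} [CommSemiring R] [Ring A] [Ring B] [Algebra R A] [Algebra R B]
    (f : A →ₐ[R] B) (x y : A) : f (brkt x y) = brkt (f x) (f y) := by
  simp only [brkt, map_sub, map_mul]

section AdNilpotent

variable {A : Type*} [Ring A]

lemma ad_iterate_two_eq_zero {R : Type*} [CommSemiring R] [Algebra R A] {e h : A} {c : R}
    (hhe : brkt h e = c • e) : (fun x => e * x - x * e)^[2] h = 0 := by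
  have had : e * h - h * e = -(c • e) := by rw [← hhe, brkt, neg_sub]
  simp only [Function.iterate_succ, Function.iterate_zero, Function.comp_apply, id_eq, had,
    mul_neg, neg_mul, mul_smul_comm, smul_mul_assoc, sub_self]

variable {K : Type*} [Field K] [Algebra K A]

/-- The correction `-½ h₁²` cancels the symmetrised term of `[h₂, e]`. -/
lemma ad_sub_half_sq_eq {e e₂ h₁ h₂ : A} {c : K} (h₁e : brkt h₁ e = c • e)
    (h₂e : brkt h₂ e = c • e₂ + (c / 2) • (h₁ * e + e * h₁)) :
    e * (h₂ - (2⁻¹ : K) • h₁ ^ 2) - (h₂ - (2⁻¹ : K) • h₁ ^ 2) * e = -(c • e₂) := by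
  have expand : e * (h₂ - (2⁻¹ : K) • h₁ ^ 2) - (h₂ - (2⁻¹ : K) • h₁ ^ 2) * e
      = -brkt h₂ e + (2⁻¹ : K) • (h₁ * brkt h₁ e + brkt h₁ e * h₁) := by
    simp only [brkt, sq, mul_sub, sub_mul, mul_smul_comm, smul_mul_assoc, smul_sub, smul_add,
      mul_assoc]
    abel
  rw [expand, h₁e, h₂e, div_eq_mul_inv]
  simp only [mul_smul_comm, smul_mul_assoc, smul_add, smul_smul]
  module

lemma ad_iterate_three_sub_half_sq_eq_zero {e e₂ h₁ h₂ : A} {c : K} {r : ℤ}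
    (h₁e : brkt h₁ e = c • e) (h₂e : brkt h₂ e = c • e₂ + (c / 2) • (h₁ * e + e * h₁))
    (ee₂ : brkt e e₂ = -(r • e ^ 2)) :
    (fun x => e * x - x * e)^[3] (h₂ - (2⁻¹ : K) • h₁ ^ 2) = 0 := by
  have ad_e₂ : e * -(c • e₂) - -(c • e₂) * e = -(c • brkt e e₂) := by
    rw [brkt, mul_neg, neg_mul, mul_smul_comm, smul_mul_assoc, smul_sub, neg_sub_neg, neg_sub]
  simp only [Function.iterate_succ, Function.iterate_zero, Function.comp_apply, id_eq]
  rw [ad_sub_half_sq_eq h₁e h₂e, ad_e₂, ee₂]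
  simp only [smul_neg, neg_neg, mul_smul_comm, smul_mul_assoc, ← pow_succ, ← pow_succ', sub_self]

end AdNilpotent

variable {I : Type} {a : I → I → ℤ} {d m : I → ℤ}

lemma H_self_eq_one (j : I) : H I a d m j (m j) = 1 := by
  have rel := RingQuot.mkAlgHom_rel ℂ (Rel.Hone (a := a) (d := d) (m := m) j)
  rw [map_one] at rel
  exact rel

lemma brkt_H_succ_E_sub (j i : I) (p : ℤ) (q : ℕ+) :
    brkt (H I a d m j (p + 1)) (E I a d m i q) - brkt (H I a d m j p) (E I a d m i (q + 1)) =
      (((d j * a j i : ℤ) : ℂ) / 2) •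
        (H I a d m j p * E I a d m i q + E I a d m i q * H I a d m j p) := by
  have rel := RingQuot.mkAlgHom_rel ℂ (Rel.HE (a := a) (d := d) (m := m) j i p q)
  simp only [map_sub, map_brkt, map_smul, map_add, map_mul] at rel
  exact rel

lemma brkt_E_succ_E_sub (i j : I) (p q : ℕ+) :
    brkt (E I a d m i (p + 1)) (E I a d m j q) - brkt (E I a d m i p) (E I a d m j (q + 1)) =
      (((d i * a i j : ℤ) : ℂ) / 2) •
        (E I a d m i p * E I a d m j q + E I a d m j q * E I a d m i p) := by
  have rel := RingQuot.mkAlgHom_rel ℂ (Rel.EE (a := a) (d := d) (m := m) i j p q)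
  simp only [map_sub, map_brkt, map_smul, map_add, map_mul] at rel
  exact rel

lemma brkt_H_self_add_one_E (j i : I) (q : ℕ+) :
    brkt (H I a d m j (m j + 1)) (E I a d m i q) = ((d j * a j i : ℤ) : ℂ) • E I a d m i q := by
  have rel := brkt_H_succ_E_sub (a := a) (d := d) (m := m) j i (m j) q
  simp only [H_self_eq_one, brkt, one_mul, mul_one, sub_self, sub_zero] at rel
  rw [brkt, rel]
  module

lemma brkt_H_self_add_two_E_one (j i : I) :
    brkt (H I a d m j (m j + 2)) (E I a d m i 1) =
      ((d j * a j i : ℤ) : ℂ) • E I a d m i 2 + (((d j * a j i : ℤ) : ℂ) / 2) •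
        (H I a d m j (m j + 1) * E I a d m i 1 + E I a d m i 1 * H I a d m j (m j + 1)) := by
  have rel := brkt_H_succ_E_sub (a := a) (d := d) (m := m) j i (m j + 1) 1
  rw [add_assoc, show (1 + 1 : ℤ) = 2 from rfl, show (1 + 1 : ℕ+) = 2 from rfl,
    brkt_H_self_add_one_E, sub_eq_iff_eq_add'] at rel
  exact rel

lemma brkt_E_one_E_two {i : I} (hii : a i i = 2) :
    brkt (E I a d m i 1) (E I a d m i 2) = -(d i • E I a d m i 1 ^ 2) := by
  have rel := brkt_E_succ_E_sub (a := a) (d := d) (m := m) i i 1 1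
  rw [show (1 + 1 : ℕ+) = 2 from rfl, hii] at rel
  apply smul_right_injective _ (two_ne_zero (α := ℂ))
  simp only [brkt] at rel ⊢
  rw [← Int.cast_smul_eq_zsmul ℂ, sq]
  linear_combination (norm := module) -rel

end ShiftedYangian

open ShiftedYangian in
theorem ad_E_one_nilpotency_computations_general
    (I : Type) (a : I → I → ℤ) (d : I → ℤ) (m : I → ℤ)
    (ha2 : ∀ i, a i i = 2)
    (i j : I) :
    ((fun x => E I a d m i 1 * x - x * E I a d m i 1)^[2] (H I a d m j (m j + 1)) = 0) ∧
    (brkt (E I a d m i 1) (E I a d m i 2) = -(d i • (E I a d m i 1) ^ 2)) ∧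
    ((fun x => E I a d m i 1 * x - x * E I a d m i 1)^[3]
        (H I a d m j (m j + 2) - (2⁻¹ : ℂ) • (H I a d m j (m j + 1)) ^ 2) = 0) :=
  ⟨ad_iterate_two_eq_zero (brkt_H_self_add_one_E j i 1),
    brkt_E_one_E_two (ha2 i),
    ad_iterate_three_sub_half_sq_eq_zero (brkt_H_self_add_one_E j i 1)
      (brkt_H_self_add_two_E_one j i) (brkt_E_one_E_two (ha2 i))⟩

open ShiftedYangian in
/-- The nilpotency computations from the proof of Theorem 6.4 ('OreYmu') of the paper, with
`S_j = H_j^{(m_j+2)} − ½ (H_j^{(m_j+1)})²` and `ad_x(a) = xa − ax`: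
(a) `(ad_{E_i^{(1)}})² (H_j^{(m_j+1)}) = 0`; (b) `[E_i^{(1)}, E_i^{(2)}] = −d_i (E_i^{(1)})²`;
(c) `(ad_{E_i^{(1)}})³ (S_j) = 0`. -/
theorem ad_E_one_nilpotency_computations
    (I : Type) [Fintype I] (a : I → I → ℤ) (d : I → ℤ) (m : I → ℤ)
    (ha2 : ∀ i, a i i = 2) (haneg : ∀ i j, i ≠ j → a i j ≤ 0)
    (hd : ∀ i, 0 < d i) (hsym : ∀ i j, d i * a i j = d j * a j i)
    (i j : I) :
    ((fun x => E I a d m i 1 * x - x * E I a d m i 1)^[2] (H I a d m j (m j + 1)) = 0) ∧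
    (brkt (E I a d m i 1) (E I a d m i 2) = -(d i • (E I a d m i 1) ^ 2)) ∧
    ((fun x => E I a d m i 1 * x - x * E I a d m i 1)^[3]
        (H I a d m j (m j + 2) - (2⁻¹ : ℂ) • (H I a d m j (m j + 1)) ^ 2) = 0) :=
  ad_E_one_nilpotency_computations_general I a d m ha2 i j
end

section
/- Let σ be a type, let w : σ → ℕ be a weight function, and consider the polynomial ring MvPolynomial σ ℂ with its w-weighted grading (the variable X_s is homogeneous of degree w(s)). Let J be an ideal of MvPolynomial σ ℂ which is homogeneous for this grading, and let B := MvPolynomial σ ℂ / J. For d ∈ ℕ let I_d ⊆ B be the ideal generated by the images of the variables X_s with w(s) > d. Then ⋂_{d∈ℕ} I_d = 0. -/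
/-!
Write `b = [p]` with `p` of weighted degree `D`. Membership in `I_D` gives
`p ≡ x (mod J)` with every monomial of `x` of weight `> D`, so `p` and `p - x ∈ J` have the same
weighted components in degrees `≤ D`, and `p` has none above `D`. Homogeneity of `J` puts every
component of `p`, hence `p`, in `J`.
-/

namespace MvPolynomial

variable {σ R : Type*} (w : σ → ℕ)

section CommSemiring

variable [CommSemiring R]

theorem weightedHomogeneousComponent_eq_zero_of_mem_span_X_image {d n : ℕ}
    {x : MvPolynomial σ R} (hx : x ∈ Ideal.span (X '' {s | d < w s})) (hn : n ≤ d) :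
    weightedHomogeneousComponent w n x = 0 := by
  refine weightedHomogeneousComponent_eq_zero' n x fun m hm hmn => ?_
  obtain ⟨s, hs, hms⟩ := mem_ideal_span_X_image.mp hx m hm
  have hs : d < w s := hs
  have : w s ≤ Finsupp.weight w m := Finsupp.le_weight_of_ne_zero' w hms
  omega

theorem mem_of_forall_weightedHomogeneousComponent_mem {J : Ideal (MvPolynomial σ R)}
    {p : MvPolynomial σ R} (hp : ∀ n, weightedHomogeneousComponent w n p ∈ J) : p ∈ J := by
  rw [← sum_weightedHomogeneousComponent w p,
    finsum_eq_sum _ (weightedHomogeneousComponent_finsupp p)]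
  exact J.sum_mem fun n _ => hp n

end CommSemiring

theorem mem_of_sub_mem_of_weightedTotalDegree_le [CommRing R] {J : Ideal (MvPolynomial σ R)}
    (hJ : ∀ p ∈ J, ∀ n : ℕ, weightedHomogeneousComponent w n p ∈ J) {d : ℕ}
    {p x : MvPolynomial σ R} (hp : p.weightedTotalDegree w ≤ d)
    (hx : x ∈ Ideal.span (X '' {s | d < w s})) (hpx : p - x ∈ J) : p ∈ J := by
  refine mem_of_forall_weightedHomogeneousComponent_mem w fun n => ?_
  rcases le_or_gt n d with hn | hn
  · have hcomp :
        weightedHomogeneousComponent w n p = weightedHomogeneousComponent w n (p - x) := by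
      rw [map_sub, weightedHomogeneousComponent_eq_zero_of_mem_span_X_image w hx hn, sub_zero]
    exact hcomp ▸ hJ _ hpx n
  · rw [weightedHomogeneousComponent_eq_zero n p (hp.trans_lt hn)]
    exact J.zero_mem

end MvPolynomial

open MvPolynomial in
/-- Lemma 2.3 of the paper, in the concrete form in which it is proved: let `B` be the quotient
of a polynomial ring `MvPolynomial σ ℂ` by an ideal `J` that is homogeneous for the `w`-weighted
grading, and for each `d` let `I d` be the ideal of `B` generated by the images of the variables
`X s` with `w s > d`.  Then `⋂_d I_d = 0`. -/
theorem inf_truncation_ideals_eq_bot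
    {σ : Type*} (w : σ → ℕ) (J : Ideal (MvPolynomial σ ℂ))
    (hJ : ∀ p ∈ J, ∀ n : ℕ, MvPolynomial.weightedHomogeneousComponent w n p ∈ J) :
    (⨅ d : ℕ, Ideal.span
        ((fun s => Ideal.Quotient.mk J (MvPolynomial.X s)) '' {s : σ | d < w s})) = ⊥ := by
  refine eq_bot_iff.mpr fun b hb => ?_
  obtain ⟨p, rfl⟩ := Ideal.Quotient.mk_surjective b
  have hpD := Ideal.mem_iInf.mp hb (p.weightedTotalDegree w)
  rw [← Set.image_image, ← Ideal.map_span,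
    Ideal.mem_map_iff_of_surjective _ Ideal.Quotient.mk_surjective] at hpD
  obtain ⟨x, hx, hxp⟩ := hpD
  have hpx : p - x ∈ J := sub_mem_comm_iff.mp (Ideal.Quotient.eq.mp hxp)
  exact Ideal.mem_bot.mpr <| Ideal.Quotient.eq_zero_iff_mem.mpr <|
    mem_of_sub_mem_of_weightedTotalDegree_le w hJ le_rfl hx hpx
end
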